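/- arXiv:2503.10254 — 2 statements merged into one kernel-verified Lean document; each statement's English description precedes it below -/
import Mathlib

section
/- Exact suffix retrieval by querying: if v_0, …, v_{n-1} are bipolar hypervectors in {-1,1}^D with n ≥ 1, and the query vector is q = P_k(Encode(v_0, …, v_{n-2})) (the shifted encoding of the length-(n-1) prefix), then binding the full encoding with the query recovers the last state exactly: Encode(v_0, …, v_{n-1}) ⊗ q = v_{n-1}. -/
/-! The encoding satisfies the recursion `Encode(v_0, …, v_n) = P_k(Encode(v_0, …, v_{n-1})) ⊗ v_n`,
and every bipolar vector is its own inverse under binding. Since the prefix encoding `q` is a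
product of shifted bipolar vectors it is bipolar, so `Encode(V) ⊗ q = (q ⊗ v_n) ⊗ q = v_n`. -/

/-- A hypervector `v : Fin D → ℝ` is bipolar if every coordinate is `1` or `-1`. -/
def Bipolar {D : ℕ} (v : Fin D → ℝ) : Prop := ∀ i, v i = 1 ∨ v i = -1

/-- The binding operator: coordinatewise multiplication. -/
def bind {D : ℕ} (u v : Fin D → ℝ) : Fin D → ℝ := fun i => u i * v i

/-- The cyclic shift operator. -/
def shift {D : ℕ} (k : Fin D) (v : Fin D → ℝ) : Fin D → ℝ := fun i => v (i + k)

/-- `Encode(v_0, …, v_{n-1}) = ⊗_{j=0}^{n-1} P_k^{n-1-j}(v_j)`; the encoding of the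
empty sequence is the all-ones vector. -/
def Encode {D : ℕ} (k : Fin D) {n : ℕ} (V : Fin n → (Fin D → ℝ)) : Fin D → ℝ :=
  fun i => ∏ j : Fin n, (shift k)^[n - 1 - (j : ℕ)] (V j) i

section

variable {D : ℕ}

theorem bipolar_iff_mul_self {v : Fin D → ℝ} : Bipolar v ↔ ∀ i, v i * v i = 1 :=
  forall_congr' fun _ => mul_self_eq_one_iff.symm

theorem Bipolar.shift {v : Fin D → ℝ} (hv : Bipolar v) (k : Fin D) :
    Bipolar (_root_.shift k v) :=
  fun i => hv (i + k)

theorem Bipolar.iterate_shift {v : Fin D → ℝ} (hv : Bipolar v) (k : Fin D) (m : ℕ) :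
    Bipolar ((_root_.shift k)^[m] v) := by
  induction m with
  | zero => exact hv
  | succ m ih =>
    rw [Function.iterate_succ_apply']
    exact ih.shift k

theorem Bipolar.encode (k : Fin D) {n : ℕ} {V : Fin n → Fin D → ℝ} (hV : ∀ j, Bipolar (V j)) :
    Bipolar (Encode k V) := by
  refine bipolar_iff_mul_self.2 fun i => ?_
  rw [Encode, ← Finset.prod_mul_distrib]
  exact Finset.prod_eq_one fun j _ => bipolar_iff_mul_self.1 ((hV j).iterate_shift k _) i

theorem encode_succ (k : Fin D) {n : ℕ} (V : Fin (n + 1) → Fin D → ℝ) :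
    Encode k V = bind (shift k (Encode k fun j : Fin n => V j.castSucc)) (V (Fin.last n)) := by
  funext i
  simp only [Encode, _root_.bind, Fin.prod_univ_castSucc, Fin.val_last, Fin.val_castSucc,
    Nat.add_sub_cancel, Nat.sub_self, Function.iterate_zero, id_eq]
  congr 1
  refine Finset.prod_congr rfl fun j _ => ?_
  have hexp : n - (j : ℕ) = n - 1 - (j : ℕ) + 1 := by omega
  rw [hexp, Function.iterate_succ_apply']
  rfl

end

theorem encode_query_recovers_last_general {D : ℕ} (k : Fin D) (n : ℕ)
    (V : Fin (n + 1) → (Fin D → ℝ)) (hV : ∀ j, Bipolar (V j)) :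
    bind (Encode k V) (shift k (Encode k (fun j : Fin n => V j.castSucc))) = V (Fin.last n) := by
  set q := shift k (Encode k fun j : Fin n => V j.castSucc)
  have hq : ∀ i, q i * q i = 1 :=
    bipolar_iff_mul_self.1 ((Bipolar.encode k fun j => hV j.castSucc).shift k)
  funext i
  rw [encode_succ]
  simp only [_root_.bind]
  linear_combination V (Fin.last n) i * hq i

/-- Exact suffix retrieval: binding the encoding of a sequence of length `n + 1 ≥ 1` of
bipolar hypervectors with the query `q = P_k(Encode(prefix))` recovers the last state. -/
theorem encode_query_recovers_last {D : ℕ} (hD : 0 < D) (k : Fin D) (n : ℕ)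
    (V : Fin (n + 1) → (Fin D → ℝ)) (hV : ∀ j, Bipolar (V j)) :
    bind (Encode k V) (shift k (Encode k (fun j : Fin n => V j.castSucc))) = V (Fin.last n) :=
  encode_query_recovers_last_general k n V hV
end

section
/- Constant-time sliding-window update identity (core of the paper's Theorem on amortized constant-time n-gram construction): let s_0, s_1, …, s_{m-1} be a session of bipolar hypervectors in {-1,1}^D, let n ≥ 1, and for each valid index i let G_i = Encode(s_i, s_{i+1}, …, s_{i+n-1}) denote the encoding of the n-gram starting at index i. Then for every i with i + n ≤ m - 1, the next n-gram encoding is obtained from the previous one by one unbinding, one shift, and one binding: G_{i+1} = P_k(G_i ⊗ P_k^{n-1}(s_i)) ⊗ s_{i+n}. -/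
/-- The encoding of the `n`-gram of the session `s` starting at index `i`. -/
def Gram {D : ℕ} (k : Fin D) (n : ℕ) (s : ℕ → (Fin D → ℝ)) (i : ℕ) : Fin D → ℝ :=
  Encode k (fun j : Fin n => s (i + (j : ℕ)))

/-!
Peeling the oldest element off the window gives `G_i = P^{n-1}(s_i) ⊗ E`, where `E` encodes
`s_{i+1}, …, s_{i+n-1}`, while appending the newest gives `G_{i+1} = P(E) ⊗ s_{i+n}`.
Since a bipolar vector is its own inverse under binding, `G_i ⊗ P^{n-1}(s_i) = E`.
-/

section

variable {D : ℕ}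

theorem bind_comm (u v : Fin D → ℝ) : bind u v = bind v u :=
  funext fun _ => mul_comm _ _

theorem bipolar_shift {v : Fin D → ℝ} (hv : Bipolar v) (k : Fin D) : Bipolar (shift k v) :=
  fun i => hv (i + k)

theorem bipolar_iterate_shift {v : Fin D → ℝ} (hv : Bipolar v) (k : Fin D) (r : ℕ) :
    Bipolar ((shift k)^[r] v) := by
  induction r with
  | zero => exact hv
  | succ r ih => rw [Function.iterate_succ_apply']; exact bipolar_shift ih k

theorem bind_bind_cancel_of_bipolar {v : Fin D → ℝ} (hv : Bipolar v) (u : Fin D → ℝ) :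
    bind (bind u v) v = u := by
  funext i
  rcases hv i with h | h <;> simp [_root_.bind, h]

theorem shift_iterate_succ_apply (k : Fin D) (r : ℕ) (v : Fin D → ℝ) (x : Fin D) :
    (shift k)^[r + 1] v x = (shift k)^[r] v (x + k) := by
  rw [Function.iterate_succ_apply']
  rfl

theorem encode_cons (k : Fin D) {n : ℕ} (v : Fin D → ℝ) (V : Fin n → Fin D → ℝ) :
    Encode k (Fin.cons v V : Fin (n + 1) → Fin D → ℝ) = bind ((shift k)^[n] v) (Encode k V) := by
  funext x
  simp only [Encode, _root_.bind, Fin.prod_univ_succ, Fin.cons_zero, Fin.cons_succ, Fin.val_zero,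
    Fin.val_succ]
  congr 2
  funext j
  rw [show n + 1 - 1 - (j + 1) = n - 1 - j by omega]

theorem encode_snoc (k : Fin D) {n : ℕ} (V : Fin n → Fin D → ℝ) (v : Fin D → ℝ) :
    Encode k (Fin.snoc V v : Fin (n + 1) → Fin D → ℝ) = bind (shift k (Encode k V)) v := by
  funext x
  simp only [Encode, _root_.bind, shift, Fin.prod_univ_castSucc, Fin.snoc_castSucc, Fin.snoc_last,
    Fin.val_castSucc, Fin.val_last, Nat.add_sub_cancel, Nat.sub_self, Function.iterate_zero_apply]
  congr 1
  refine Finset.prod_congr rfl fun j _ => ?_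
  rw [show n - (j : ℕ) = n - 1 - j + 1 by omega, shift_iterate_succ_apply]

theorem gram_succ_eq_bind_gram (k : Fin D) (n : ℕ) (s : ℕ → Fin D → ℝ) (i : ℕ) :
    Gram k (n + 1) s i = bind ((shift k)^[n] (s i)) (Gram k n s (i + 1)) := by
  rw [Gram, Gram, ← encode_cons]
  congr 1
  funext j
  refine Fin.cases ?_ (fun j => ?_) j
  · rfl
  · simp only [Fin.cons_succ, Fin.val_succ]
    congr 1
    omega

theorem gram_succ_eq_bind_shift_gram (k : Fin D) (n : ℕ) (s : ℕ → Fin D → ℝ) (i : ℕ) :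
    Gram k (n + 1) s i = bind (shift k (Gram k n s i)) (s (i + n)) := by
  rw [Gram, Gram, ← encode_snoc]
  congr 1
  funext j
  refine Fin.lastCases ?_ (fun j => ?_) j <;> simp

end

theorem gram_sliding_update_general {D : ℕ} (k : Fin D) (m n : ℕ) (hn : 1 ≤ n)
    (s : ℕ → (Fin D → ℝ)) (hs : ∀ j < m, Bipolar (s j))
    (i : ℕ) (hi : i + n ≤ m - 1) :
    Gram k n s (i + 1) =
      bind (shift k (bind (Gram k n s i) ((shift k)^[n - 1] (s i)))) (s (i + n)) := by
  obtain ⟨p, rfl⟩ : ∃ p, n = p + 1 := ⟨n - 1, by omega⟩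
  have hsi : Bipolar ((shift k)^[p] (s i)) := bipolar_iterate_shift (hs i (by omega)) k p
  rw [gram_succ_eq_bind_shift_gram, gram_succ_eq_bind_gram, Nat.add_sub_cancel,
    bind_comm _ (Gram k p s _), bind_bind_cancel_of_bipolar hsi, show i + 1 + p = i + (p + 1) by omega]

/-- Constant-time sliding-window update: for a session `s_0, …, s_{m-1}` of bipolar
hypervectors and `n ≥ 1`, the encoding `G_{i+1}` of the next `n`-gram is obtained from
`G_i` by one unbinding, one shift, and one binding:
`G_{i+1} = P_k(G_i ⊗ P_k^{n-1}(s_i)) ⊗ s_{i+n}` whenever `i + n ≤ m - 1`. -/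
theorem gram_sliding_update {D : ℕ} (hD : 0 < D) (k : Fin D) (m n : ℕ) (hn : 1 ≤ n)
    (s : ℕ → (Fin D → ℝ)) (hs : ∀ j < m, Bipolar (s j))
    (i : ℕ) (hi : i + n ≤ m - 1) :
    Gram k n s (i + 1) =
      bind (shift k (bind (Gram k n s i) ((shift k)^[n - 1] (s i)))) (s (i + n)) :=
  gram_sliding_update_general k m n hn s hs i hi
end
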